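/- In the polynomial ring K[x_1,…,x_5] over an algebraically closed field K, the ideal I = (x_1x_3, x_1x_4, x_2x_4, x_2x_5, x_3x_5) satisfies √I = √(x_1x_3, x_1x_4 + x_2x_5, x_2x_4 + x_3x_5). -/
import Mathlib


open MvPolynomial

/-- In `K[x_1,…,x_5]` (here `x_k = X (k-1)`), the Stanley–Reisner ideal of the 5-cycle,
`I = (x₁x₃, x₁x₄, x₂x₄, x₂x₅, x₃x₅)`, satisfies
`√I = √(x₁x₃, x₁x₄ + x₂x₅, x₂x₄ + x₃x₅)`. -/
theorem radical_C5_eq {K : Type*} [Field K] [IsAlgClosed K] :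
    (Ideal.span {X 0 * X 2, X 0 * X 3, X 1 * X 3, X 1 * X 4, X 2 * X 4} :
        Ideal (MvPolynomial (Fin 5) K)).radical =
      (Ideal.span {X 0 * X 2, X 0 * X 3 + X 1 * X 4, X 1 * X 3 + X 2 * X 4} :
        Ideal (MvPolynomial (Fin 5) K)).radical := by
  set I : Ideal (MvPolynomial (Fin 5) K) :=
    Ideal.span {X 0 * X 2, X 0 * X 3, X 1 * X 3, X 1 * X 4, X 2 * X 4} with hI
  set J : Ideal (MvPolynomial (Fin 5) K) :=
    Ideal.span {X 0 * X 2, X 0 * X 3 + X 1 * X 4, X 1 * X 3 + X 2 * X 4} with hJ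
  have ha : (X 0 * X 2 : MvPolynomial (Fin 5) K) ∈ J :=
    Ideal.subset_span (by simp)
  have hb : (X 0 * X 3 + X 1 * X 4 : MvPolynomial (Fin 5) K) ∈ J :=
    Ideal.subset_span (by simp)
  have hc : (X 1 * X 3 + X 2 * X 4 : MvPolynomial (Fin 5) K) ∈ J :=
    Ideal.subset_span (by simp)
  have hIa : (X 0 * X 2 : MvPolynomial (Fin 5) K) ∈ I := Ideal.subset_span (by simp)
  have hI03 : (X 0 * X 3 : MvPolynomial (Fin 5) K) ∈ I := Ideal.subset_span (by simp)
  have hI13 : (X 1 * X 3 : MvPolynomial (Fin 5) K) ∈ I := Ideal.subset_span (by simp)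
  have hI14 : (X 1 * X 4 : MvPolynomial (Fin 5) K) ∈ I := Ideal.subset_span (by simp)
  have hI24 : (X 2 * X 4 : MvPolynomial (Fin 5) K) ∈ I := Ideal.subset_span (by simp)
  apply le_antisymm
  · rw [Ideal.radical_le_radical_iff]
    rw [hI, Ideal.span_le]
    intro p hp
    simp only [Set.mem_insert_iff, Set.mem_singleton_iff] at hp
    rcases hp with rfl | rfl | rfl | rfl | rfl
    · exact Ideal.le_radical ha
    · refine ⟨2, ?_⟩
      have h : (X 0 * X 3 : MvPolynomial (Fin 5) K) ^ 2 =
          (X 0 * X 3) * (X 0 * X 3 + X 1 * X 4)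
          - (X 0 * X 4) * (X 1 * X 3 + X 2 * X 4)
          + (X 4 * X 4) * (X 0 * X 2) := by ring
      rw [h]
      exact J.add_mem (J.sub_mem (J.mul_mem_left _ hb) (J.mul_mem_left _ hc))
        (J.mul_mem_left _ ha)
    · refine ⟨2, ?_⟩
      have h : (X 1 * X 3 : MvPolynomial (Fin 5) K) ^ 2 =
          (X 1 * X 3) * (X 1 * X 3 + X 2 * X 4)
          - (X 2 * X 3) * (X 0 * X 3 + X 1 * X 4)
          + (X 3 * X 3) * (X 0 * X 2) := by ring
      rw [h]
      exact J.add_mem (J.sub_mem (J.mul_mem_left _ hc) (J.mul_mem_left _ hb))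
        (J.mul_mem_left _ ha)
    · refine ⟨2, ?_⟩
      have h : (X 1 * X 4 : MvPolynomial (Fin 5) K) ^ 2 =
          (X 1 * X 4) * (X 0 * X 3 + X 1 * X 4)
          - (X 1 * X 4) * (X 0 * X 3) := by ring
      have h2 : (X 1 * X 4) * (X 0 * X 3 : MvPolynomial (Fin 5) K) =
          (X 0 * X 4) * (X 1 * X 3 + X 2 * X 4) - (X 4 * X 4) * (X 0 * X 2) := by ring
      rw [h, h2]
      exact J.sub_mem (J.mul_mem_left _ hb)
        (J.sub_mem (J.mul_mem_left _ hc) (J.mul_mem_left _ ha))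
    · refine ⟨2, ?_⟩
      have h : (X 2 * X 4 : MvPolynomial (Fin 5) K) ^ 2 =
          (X 2 * X 4) * (X 1 * X 3 + X 2 * X 4)
          - ((X 2 * X 3) * (X 0 * X 3 + X 1 * X 4) - (X 3 * X 3) * (X 0 * X 2)) := by ring
      rw [h]
      exact J.sub_mem (J.mul_mem_left _ hc)
        (J.sub_mem (J.mul_mem_left _ hb) (J.mul_mem_left _ ha))
  · rw [Ideal.radical_le_radical_iff]
    rw [hJ, Ideal.span_le]
    intro p hp
    simp only [Set.mem_insert_iff, Set.mem_singleton_iff] at hp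
    rcases hp with rfl | rfl | rfl
    · exact Ideal.le_radical hIa
    · exact Ideal.le_radical (I.add_mem hI03 hI14)
    · exact Ideal.le_radical (I.add_mem hI13 hI24)
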